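/- Let f be a modulus function with lim_{t→∞} f(t)/t > 0. Then AC_θ(f) = AC_θ for every lacunary sequence θ. -/

import Mathlib

open Filter Finset

/-- Membership in the lacunary arithmetic convergence space `AC_θ`,
with lacunary sequence given by `k` (blocks `I_r = (k r, k (r+1)]`,
`h_r = k (r+1) - k r`) and witness integer `n`. -/
def ACtheta (k : ℕ → ℕ) (n : ℕ) (x : ℕ → ℝ) : Prop :=
  Tendsto (fun r => (1 / ((k (r + 1) - k r : ℕ) : ℝ)) *
    ∑ m ∈ Finset.Ioc (k r) (k (r + 1)), |x m - x (Nat.gcd m n)|) atTop (nhds 0)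

/-- Membership in the strongly Cesàro arithmetic convergence space `AC_{σ₁}`
with witness integer `n`. -/
def ACsigma (n : ℕ) (x : ℕ → ℝ) : Prop :=
  Tendsto (fun t : ℕ => (1 / (t : ℝ)) *
    ∑ m ∈ Finset.Icc 1 t, |x m - x (Nat.gcd m n)|) atTop (nhds 0)
/-- A modulus function `f : [0,∞) → [0,∞)`. -/
structure IsModulus (f : ℝ → ℝ) : Prop where
  nonneg : ∀ x, 0 ≤ x → 0 ≤ f x
  eq_zero_iff : ∀ x, 0 ≤ x → (f x = 0 ↔ x = 0)
  subadd : ∀ x y, 0 ≤ x → 0 ≤ y → f (x + y) ≤ f x + f y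
  mono : ∀ x y, 0 ≤ x → x ≤ y → f x ≤ f y
  right_cont : ContinuousWithinAt f (Set.Ici 0) 0

/-- Membership in `AC_θ(f)` with witness integer `n`. -/
def ACthetaF (f : ℝ → ℝ) (k : ℕ → ℕ) (n : ℕ) (x : ℕ → ℝ) : Prop :=
  Filter.Tendsto (fun r => (1 / ((k (r + 1) - k r : ℕ) : ℝ)) *
    ∑ m ∈ Finset.Ioc (k r) (k (r + 1)), f |x m - x (Nat.gcd m n)|)
    Filter.atTop (nhds 0)

/-!
Both spaces are "block averages tend to `0`" conditions, for `u m = |x m - x ⟨m, n⟩|` and for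
`f ∘ u`. Subadditivity gives `f (N t) / (N t) ≤ f t / t`, so letting `N → ∞` yields `β t ≤ f t`
and the `f`-averages dominate `β` times the plain ones. Conversely every modulus satisfies
`f t ≤ ε + C_ε t` (take `δ` with `f δ ≤ ε`, then `f t ≤ f (⌈t/δ⌉ δ) ≤ (t/δ + 1) f δ`), so each
`f`-average is at most `ε` plus `C_ε` times the plain average.
-/

open scoped BigOperators

namespace IsModulus

variable {f : ℝ → ℝ}

theorem map_zero (hf : IsModulus f) : f 0 = 0 :=
  (hf.eq_zero_iff 0 le_rfl).mpr rfl

theorem map_natCast_mul_le (hf : IsModulus f) {t : ℝ} (ht : 0 ≤ t) (n : ℕ) :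
    f (n * t) ≤ n * f t := by
  induction n with
  | zero => simp [hf.map_zero]
  | succ n ih =>
    calc f ((n + 1 : ℕ) * t) = f (n * t + t) := by push_cast; ring_nf
      _ ≤ f (n * t) + f t := hf.subadd _ _ (by positivity) ht
      _ ≤ (n + 1 : ℕ) * f t := by push_cast; linarith

theorem mul_le_of_tendsto_div (hf : IsModulus f) {β : ℝ}
    (hlim : Tendsto (fun t => f t / t) atTop (nhds β)) {t : ℝ} (ht : 0 ≤ t) :
    β * t ≤ f t := by
  rcases ht.eq_or_lt with rfl | ht
  · simp [hf.map_zero]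
  have hnt : Tendsto (fun n : ℕ => (n : ℝ) * t) atTop atTop :=
    tendsto_natCast_atTop_atTop.atTop_mul_const ht
  have hβ : β ≤ f t / t := by
    refine le_of_tendsto (hlim.comp hnt) ?_
    filter_upwards [eventually_gt_atTop 0] with n hn
    have hn : (0 : ℝ) < n := Nat.cast_pos.mpr hn
    calc f (n * t) / (n * t) ≤ n * f t / (n * t) :=
          div_le_div_of_nonneg_right (hf.map_natCast_mul_le ht.le n) (by positivity)
      _ = f t / t := mul_div_mul_left _ _ hn.ne'
  rwa [← le_div_iff₀ ht]

theorem exists_le_add_mul (hf : IsModulus f) {ε : ℝ} (hε : 0 < ε) :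
    ∃ C, ∀ t, 0 ≤ t → f t ≤ ε + C * t := by
  obtain ⟨δ, hδ, hfδ⟩ : ∃ δ > 0, f δ ≤ ε := by
    have hsmall : ∀ᶠ t in nhdsWithin 0 (Set.Ioi 0), f t < ε :=
      (hf.right_cont.mono Set.Ioi_subset_Ici_self).eventually
        (gt_mem_nhds (by rwa [hf.map_zero]))
    obtain ⟨δ, hfδ, hδ⟩ := (hsmall.and self_mem_nhdsWithin).exists
    exact ⟨δ, hδ, hfδ.le⟩
  refine ⟨f δ / δ, fun t ht => ?_⟩
  have hceil : t ≤ ⌈t / δ⌉₊ * δ := (div_le_iff₀ hδ).mp (Nat.le_ceil _)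
  calc f t ≤ f (⌈t / δ⌉₊ * δ) := hf.mono _ _ ht hceil
    _ ≤ ⌈t / δ⌉₊ * f δ := hf.map_natCast_mul_le hδ.le _
    _ ≤ (t / δ + 1) * f δ :=
        mul_le_mul_of_nonneg_right (Nat.ceil_lt_add_one (by positivity)).le (hf.nonneg _ hδ.le)
    _ = f δ + f δ / δ * t := by ring
    _ ≤ ε + f δ / δ * t := by gcongr

end IsModulus

section Averages

variable {α ι : Type*} {l : Filter α} {s : α → Finset ι} {u : ι → ℝ}

theorem IsModulus.tendsto_expect_comp_zero {f : ℝ → ℝ} (hf : IsModulus f) (hu : 0 ≤ u)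
    (hlim : Tendsto (fun a => 𝔼 i ∈ s a, u i) l (nhds 0)) :
    Tendsto (fun a => 𝔼 i ∈ s a, f (u i)) l (nhds 0) := by
  refine tendsto_order.2 ⟨fun b hb => Eventually.of_forall fun a =>
    hb.trans_le (expect_nonneg fun i _ => hf.nonneg _ (hu i)), fun ε hε => ?_⟩
  obtain ⟨C, hC⟩ := hf.exists_le_add_mul (half_pos hε)
  have hCu : ∀ᶠ a in l, C * 𝔼 i ∈ s a, u i < ε / 2 :=
    (hlim.const_mul C).eventually (gt_mem_nhds (by rw [mul_zero]; exact half_pos hε))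
  filter_upwards [hCu] with a ha
  rcases (s a).eq_empty_or_nonempty with hs | hs
  · simpa [hs] using hε
  calc 𝔼 i ∈ s a, f (u i) ≤ 𝔼 i ∈ s a, (ε / 2 + C * u i) :=
        expect_le_expect fun i _ => hC _ (hu i)
    _ = ε / 2 + C * 𝔼 i ∈ s a, u i := by
        rw [expect_add_distrib, expect_const hs, mul_expect]
    _ < ε := by linarith

theorem tendsto_expect_zero_of_mul_le {v : ι → ℝ} {β : ℝ} (hβ : 0 < β) (hu : 0 ≤ u)
    (huv : ∀ i, β * u i ≤ v i) (hlim : Tendsto (fun a => 𝔼 i ∈ s a, v i) l (nhds 0)) :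
    Tendsto (fun a => 𝔼 i ∈ s a, u i) l (nhds 0) := by
  refine squeeze_zero (fun a => expect_nonneg fun i _ => hu i) (fun a => ?_)
    (by simpa using hlim.const_mul β⁻¹)
  rw [mul_expect]
  exact expect_le_expect fun i _ => (le_inv_mul_iff₀ hβ).mpr (huv i)

theorem IsModulus.tendsto_expect_comp_zero_iff {f : ℝ → ℝ} (hf : IsModulus f) {β : ℝ}
    (hβ : 0 < β) (hlim : Tendsto (fun t => f t / t) atTop (nhds β)) (hu : 0 ≤ u) :
    Tendsto (fun a => 𝔼 i ∈ s a, f (u i)) l (nhds 0) ↔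
      Tendsto (fun a => 𝔼 i ∈ s a, u i) l (nhds 0) :=
  ⟨tendsto_expect_zero_of_mul_le hβ hu fun i => hf.mul_le_of_tendsto_div hlim (hu i),
    hf.tendsto_expect_comp_zero hu⟩

end Averages

theorem one_div_sub_mul_sum_Ioc_eq_expect (a b : ℕ) (g : ℕ → ℝ) :
    1 / ((b - a : ℕ) : ℝ) * ∑ m ∈ Ioc a b, g m = 𝔼 m ∈ Ioc a b, g m := by
  rw [expect_eq_sum_div_card, Nat.card_Ioc, one_div_mul_eq_div]

theorem ACthetaF_eq_ACtheta_general (f : ℝ → ℝ) (hf : IsModulus f)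
    (β : ℝ) (hβ : 0 < β)
    (hlim : Tendsto (fun t : ℝ => f t / t) atTop (nhds β))
    (k : ℕ → ℕ) :
    {x : ℕ → ℝ | ∃ n : ℕ, ACthetaF f k n x} = {x : ℕ → ℝ | ∃ n : ℕ, ACtheta k n x} := by
  ext x
  simp only [Set.mem_ofPred_eq, ACthetaF, ACtheta, one_div_sub_mul_sum_Ioc_eq_expect]
  exact exists_congr fun n => hf.tendsto_expect_comp_zero_iff hβ hlim fun m => abs_nonneg _

/-- if `lim f(t)/t = β > 0` then `AC_θ(f) = AC_θ`. -/
theorem ACthetaF_eq_ACtheta (f : ℝ → ℝ) (hf : IsModulus f)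
    (β : ℝ) (hβ : 0 < β)
    (hlim : Tendsto (fun t : ℝ => f t / t) atTop (nhds β))
    (k : ℕ → ℕ) (hk : StrictMono k)
    (hh : Tendsto (fun r => (k (r + 1) - k r : ℕ)) atTop atTop) :
    {x : ℕ → ℝ | ∃ n : ℕ, ACthetaF f k n x} = {x : ℕ → ℝ | ∃ n : ℕ, ACtheta k n x} :=
  ACthetaF_eq_ACtheta_general f hf β hβ hlim k
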